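/- Consider the double complex of the Inoue surface S^± with parameter q ∈ R: A = Λ⟨φ1,φ2,φ̄1,φ̄2⟩ with ∂φ1 = (1/(2i))φ1∧φ2, ∂̄φ1 = (1/(2i))φ2∧φ̄1 + (qi/2)φ2∧φ̄2, ∂φ2 = 0, ∂̄φ2 = (1/(2i))φ2∧φ̄2, and conjugate relations. Then the de Rham cohomology of the total complex has b1 = 1, generated by the class of φ2 - φ̄2, and b3 = 1, generated by the class of φ1∧φ2∧φ̄1 - q φ1∧φ2∧φ̄2 - φ1∧φ̄1∧φ̄2 + q φ2∧φ̄1∧φ̄2, while b2 = 0. -/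

import Mathlib

open Finset Module Complex

noncomputable section

/-- Index type: subsets of the 4 generators. Generators: 0 ↦ φ1, 1 ↦ φ2, 2 ↦ φ̄1, 3 ↦ φ̄2. -/
abbrev ι : Type := Finset (Fin 4)

/-- The underlying 16-dimensional vector space of Λ⟨φ1,φ2,φ̄1,φ̄2⟩. -/
abbrev V : Type := ι → ℂ

/-- Basis vector corresponding to the wedge of the generators in `S` (in increasing order). -/
def e (S : ι) : V := fun T => if T = S then 1 else 0

/-- Structure constants of the exterior (wedge) product on basis elements. -/
def wedgeB (S T : ι) : V :=
  if Disjoint S T then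
    ((-1 : ℂ) ^ (((S ×ˢ T).filter (fun x => x.2 < x.1)).card)) • e (S ∪ T)
  else 0

/-- The wedge product on `V`. -/
def mulV (v w : V) : V := ∑ S : ι, ∑ T : ι, (v S * w T) • wedgeB S T

/-- The odd derivation determined by its values `g` on the generators. -/
def der (g : Fin 4 → V) : V →ₗ[ℂ] V :=
  (Pi.basisFun ℂ ι).constr ℂ (fun S =>
    ∑ i ∈ S, ((-1 : ℂ) ^ ((S.filter (fun j => j < i)).card)) •
      mulV (g i) (e (S.erase i)))

/-- Holomorphic degree of a basis index. -/
def pdeg (S : ι) : ℕ := (S ∩ ({0, 1} : Finset (Fin 4))).card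

/-- Anti-holomorphic degree of a basis index. -/
def qdeg (S : ι) : ℕ := (S ∩ ({2, 3} : Finset (Fin 4))).card

/-- The bidegree-(p,q) component `A^{p,q}`. -/
def Apq (p q : ℕ) : Submodule ℂ V :=
  Submodule.span ℂ ((fun S => e S) '' {S : ι | pdeg S = p ∧ qdeg S = q})

/-- The total-degree-k component `A^k`. -/
def Ak (k : ℕ) : Submodule ℂ V :=
  Submodule.span ℂ ((fun S => e S) '' {S : ι | S.card = k})

/-- Dimension of Dolbeault cohomology `H^{p,q}_∂̄ = ker ∂̄ / im ∂̄` in bidegree (p,q). -/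
def hD (delbar : V →ₗ[ℂ] V) (p q : ℕ) : ℕ :=
  finrank ℂ (↥(Apq p q ⊓ LinearMap.ker delbar) ⧸
    Submodule.comap (Apq p q ⊓ LinearMap.ker delbar).subtype
      (Submodule.map delbar (Apq p (q - 1))))

/-- Dimension of Bott-Chern cohomology `H^{p,q}_BC = (ker ∂ ∩ ker ∂̄)/im ∂∂̄` in bidegree (p,q). -/
def hBC (del delbar : V →ₗ[ℂ] V) (p q : ℕ) : ℕ :=
  finrank ℂ (↥(Apq p q ⊓ LinearMap.ker del ⊓ LinearMap.ker delbar) ⧸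
    Submodule.comap (Apq p q ⊓ LinearMap.ker del ⊓ LinearMap.ker delbar).subtype
      (Submodule.map (del ∘ₗ delbar) (Apq (p - 1) (q - 1))))

/-- Dimension of Aeppli cohomology `H^{p,q}_A = ker ∂∂̄ / (im ∂ + im ∂̄)` in bidegree (p,q). -/
def hA (del delbar : V →ₗ[ℂ] V) (p q : ℕ) : ℕ :=
  finrank ℂ (↥(Apq p q ⊓ LinearMap.ker (del ∘ₗ delbar)) ⧸
    Submodule.comap (Apq p q ⊓ LinearMap.ker (del ∘ₗ delbar)).subtype
      (Submodule.map del (Apq (p - 1) q) ⊔ Submodule.map delbar (Apq p (q - 1))))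

/-- Dimension of the degree-k de Rham cohomology of the total complex with `d = ∂ + ∂̄`. -/
def betti (d : V →ₗ[ℂ] V) (k : ℕ) : ℕ :=
  finrank ℂ (↥(Ak k ⊓ LinearMap.ker d) ⧸
    Submodule.comap (Ak k ⊓ LinearMap.ker d).subtype
      (Submodule.map d (Ak (k - 1))))

/-- The coefficient 1/(2i) of the Inoue S^± model. -/
def cSP : ℂ := 1 / (2 * Complex.I)

/-- The `∂` operator of the Inoue S^± model (parameter q ∈ ℝ): ∂φ1 = (1/(2i))φ1∧φ2,
∂φ2 = 0, ∂φ̄1 = (1/(2i))φ1∧φ̄2 + (qi/2)φ2∧φ̄2, ∂φ̄2 = (1/(2i))φ2∧φ̄2 (conjugate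
relations). -/
def delSP (q : ℝ) : V →ₗ[ℂ] V :=
  der ![cSP • e {0, 1}, 0,
        cSP • e {0, 3} + (((q : ℂ) * Complex.I) / 2) • e {1, 3},
        cSP • e {1, 3}]

/-- The `∂̄` operator of the Inoue S^± model: ∂̄φ1 = (1/(2i))φ2∧φ̄1 + (qi/2)φ2∧φ̄2,
∂̄φ2 = (1/(2i))φ2∧φ̄2, ∂̄φ̄1 = -(1/(2i))φ̄1∧φ̄2, ∂̄φ̄2 = 0. -/
def delbarSP (q : ℝ) : V →ₗ[ℂ] V :=
  der ![cSP • e {1, 2} + (((q : ℂ) * Complex.I) / 2) • e {1, 3},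
        cSP • e {1, 3}, (-cSP) • e {2, 3}, 0]

/-- The total differential of the Inoue S^± complex. -/
def dSP (q : ℝ) : V →ₗ[ℂ] V := delSP q + delbarSP q

/-!
Everything is finite-dimensional linear algebra on the 16 monomials. From the values of `d` on
the monomials of degree at most two one reads off that `d` kills constants and that the closed
1-forms are the multiples of `φ2 - φ̄2`; that every closed 2-form is `d` of an explicit 1-form;
and that all 3-forms are closed while the exact ones satisfy a linear condition (the coefficients
of `φ1∧φ2∧φ̄1` and `φ1∧φ̄1∧φ̄2` agree) that the given 3-form violates, and span the complementary
hyperplane. Each Betti number is then the codimension, `0` or `1`, of the exact forms in the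
closed ones.
-/

section QuotientFinrank

variable {K W : Type*} [DivisionRing K] [AddCommGroup W] [Module K W]

theorem finrank_quotient_comap_subtype_self (M : Submodule K W) :
    finrank K (M ⧸ M.comap M.subtype) = 0 := by
  rw [Submodule.comap_subtype_self]
  exact finrank_zero_of_subsingleton

theorem finrank_quotient_comap_subtype_of_eq_sup_span [FiniteDimensional K W]
    {M B : Submodule K W} {g : W} (hM : M = B ⊔ K ∙ g) (hg : g ∉ B) :
    finrank K (M ⧸ B.comap M.subtype) = 1 := by
  subst hM
  have hquot := Submodule.finrank_quotient_add_finrank (B.comap (B ⊔ K ∙ g).subtype)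
  rw [(Submodule.comapSubtypeEquivOfLe le_sup_left).finrank_eq,
    Submodule.finrank_sup_span_singleton hg] at hquot
  omega

end QuotientFinrank

lemma betti_succ_eq_zero {d : V →ₗ[ℂ] V} {k : ℕ}
    (h : Ak (k + 1) ⊓ LinearMap.ker d = Submodule.map d (Ak k)) : betti d (k + 1) = 0 := by
  rw [betti, Nat.add_sub_cancel, ← h]
  exact finrank_quotient_comap_subtype_self _

lemma betti_succ_eq_one {d : V →ₗ[ℂ] V} {k : ℕ} {g : V}
    (h : Ak (k + 1) ⊓ LinearMap.ker d = Submodule.map d (Ak k) ⊔ ℂ ∙ g)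
    (hg : g ∉ Submodule.map d (Ak k)) : betti d (k + 1) = 1 := by
  rw [betti, Nat.add_sub_cancel]
  exact finrank_quotient_comap_subtype_of_eq_sup_span h hg

lemma e_eq_basisFun (S : ι) : e S = Pi.basisFun ℂ ι S := by
  ext T; simp [e, Pi.single_apply]

lemma der_apply_e (g : Fin 4 → V) (S : ι) :
    der g (e S) = ∑ i ∈ S, ((-1 : ℂ) ^ #{j ∈ S | j < i}) • mulV (g i) (e (S.erase i)) := by
  rw [e_eq_basisFun, der, Basis.constr_basis]

@[simp] lemma mulV_zero_left (w : V) : mulV 0 w = 0 := by simp [mulV]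

@[simp] lemma mulV_add_left (u v w : V) : mulV (u + v) w = mulV u w + mulV v w := by
  simp [mulV, add_mul, add_smul, Finset.sum_add_distrib]

@[simp] lemma mulV_smul_left (a : ℂ) (v w : V) : mulV (a • v) w = a • mulV v w := by
  simp [mulV, mul_assoc, smul_smul, Finset.smul_sum]

@[simp] lemma mulV_neg_left (v w : V) : mulV (-v) w = -mulV v w := by
  simp [mulV, Finset.sum_neg_distrib]

@[simp] lemma mulV_e_e (A B : ι) : mulV (e A) (e B) = wedgeB A B := by
  simp [mulV, e, mul_ite, ite_smul]

lemma e_mem_Ak {S : ι} {k : ℕ} (h : S.card = k) : e S ∈ Ak k :=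
  Submodule.subset_span ⟨S, h, rfl⟩

lemma apply_eq_zero_of_mem_Ak {k : ℕ} {v : V} (hv : v ∈ Ak k) {T : ι} (hT : T.card ≠ k) :
    v T = 0 := by
  induction hv using Submodule.span_induction with
  | mem x hx =>
    obtain ⟨S, hS, rfl⟩ := hx
    exact if_neg (by rintro rfl; exact hT hS)
  | zero => rfl
  | add x y _ _ hx hy => simp [hx, hy]
  | smul a x _ hx => simp [hx]

lemma eq_sum_of_mem_Ak {k : ℕ} {v : V} (hv : v ∈ Ak k) :
    v = ∑ S with S.card = k, v S • e S := by
  rw [Finset.sum_filter_of_ne fun S _ h => ?_]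
  · simpa [e_eq_basisFun] using ((Pi.basisFun ℂ ι).sum_repr v).symm
  · by_contra hS
    exact h (by rw [apply_eq_zero_of_mem_Ak hv hS, zero_smul])

@[simp] lemma e_mem_Ak_iff {S : ι} {k : ℕ} : e S ∈ Ak k ↔ S.card = k := by
  refine ⟨fun h => ?_, e_mem_Ak⟩
  by_contra hS
  simpa [e] using apply_eq_zero_of_mem_Ak h hS

lemma wedgeB_mem_Ak (S T : ι) : wedgeB S T ∈ Ak (S.card + T.card) := by
  unfold wedgeB
  split_ifs with h
  · exact Submodule.smul_mem _ _ (e_mem_Ak (Finset.card_union_of_disjoint h))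
  · exact zero_mem _

lemma mulV_mem_Ak {a b : ℕ} {v w : V} (hv : v ∈ Ak a) (hw : w ∈ Ak b) :
    mulV v w ∈ Ak (a + b) := by
  refine Submodule.sum_mem _ fun S _ => Submodule.sum_mem _ fun T _ => ?_
  by_cases hS : S.card = a
  · by_cases hT : T.card = b
    · exact Submodule.smul_mem _ _ (hS ▸ hT ▸ wedgeB_mem_Ak S T)
    · simp [apply_eq_zero_of_mem_Ak hw hT]
  · simp [apply_eq_zero_of_mem_Ak hv hS]

lemma der_mem_Ak {g : Fin 4 → V} (hg : ∀ i, g i ∈ Ak 2) {k : ℕ} {v : V} (hv : v ∈ Ak k) :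
    der g v ∈ Ak (k + 1) := by
  suffices Ak k ≤ (Ak (k + 1)).comap (der g) from this hv
  rw [Ak, Submodule.span_le]
  rintro _ ⟨S, rfl, rfl⟩
  rw [SetLike.mem_coe, Submodule.mem_comap, der_apply_e]
  refine Submodule.sum_mem _ fun i hi => Submodule.smul_mem _ _ ?_
  have hdeg : 2 + (S.erase i).card = S.card + 1 := by
    rw [Finset.card_erase_of_mem hi]
    have := Finset.card_pos.2 ⟨i, hi⟩
    omega
  exact hdeg ▸ mulV_mem_Ak (hg i) (e_mem_Ak rfl)

lemma dSP_mem_Ak (q : ℝ) {k : ℕ} {v : V} (hv : v ∈ Ak k) : dSP q v ∈ Ak (k + 1) := by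
  refine add_mem (der_mem_Ak (fun i => ?_) hv) (der_mem_Ak (fun i => ?_) hv) <;>
  fin_cases i <;> simp +decide [add_mem, Submodule.smul_mem]

lemma card_eq_one_iff_fin_four (S : ι) :
    S.card = 1 ↔ S = {0} ∨ S = {1} ∨ S = {2} ∨ S = {3} := by
  revert S; decide

lemma card_eq_two_iff_fin_four (S : ι) : S.card = 2 ↔
    S = {0, 1} ∨ S = {0, 2} ∨ S = {0, 3} ∨ S = {1, 2} ∨ S = {1, 3} ∨ S = {2, 3} := by
  revert S; decide

lemma card_eq_three_iff_fin_four (S : ι) :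
    S.card = 3 ↔ S = {0, 1, 2} ∨ S = {0, 1, 3} ∨ S = {0, 2, 3} ∨ S = {1, 2, 3} := by
  revert S; decide

lemma eq_of_mem_Ak_one {v : V} (hv : v ∈ Ak 1) :
    v = v {0} • e {0} + v {1} • e {1} + v {2} • e {2} + v {3} • e {3} := by
  conv_lhs => rw [eq_sum_of_mem_Ak hv]
  rw [show ({S | S.card = 1} : Finset ι) = {{0}, {1}, {2}, {3}} by decide]
  simp +decide [Finset.sum_insert, add_assoc]

lemma eq_of_mem_Ak_two {v : V} (hv : v ∈ Ak 2) :
    v = v {0, 1} • e {0, 1} + v {0, 2} • e {0, 2} + v {0, 3} • e {0, 3} +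
      v {1, 2} • e {1, 2} + v {1, 3} • e {1, 3} + v {2, 3} • e {2, 3} := by
  conv_lhs => rw [eq_sum_of_mem_Ak hv]
  rw [show ({S | S.card = 2} : Finset ι) = {{0, 1}, {0, 2}, {0, 3}, {1, 2}, {1, 3}, {2, 3}} by
    decide]
  simp +decide [Finset.sum_insert, add_assoc]

lemma cSP_ne_zero : cSP ≠ 0 := by simp [cSP]

lemma dSP_e_empty (q : ℝ) : dSP q (e ∅) = 0 := by
  simp [dSP, delSP, delbarSP, der_apply_e]

-- Simp writes the generators of a product monomial in no fixed order, so the resulting vector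
-- identities are checked coordinatewise over all 16 monomials.
lemma dSP_e₀ (q : ℝ) :
    dSP q (e {0}) = cSP • e {0, 1} + cSP • e {1, 2} + ((q : ℂ) * I / 2) • e {1, 3} := by
  simp +decide [dSP, delSP, delbarSP, der_apply_e, wedgeB]
  ext T; fin_cases T <;> simp +decide [e]

lemma dSP_e₁ (q : ℝ) : dSP q (e {1}) = cSP • e {1, 3} := by
  simp +decide [dSP, delSP, delbarSP, der_apply_e, wedgeB]

lemma dSP_e₂ (q : ℝ) :
    dSP q (e {2}) = cSP • e {0, 3} + ((q : ℂ) * I / 2) • e {1, 3} - cSP • e {2, 3} := by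
  simp +decide [dSP, delSP, delbarSP, der_apply_e, wedgeB]
  ext T; fin_cases T <;> simp +decide [e]

lemma dSP_e₃ (q : ℝ) : dSP q (e {3}) = cSP • e {1, 3} := by
  simp +decide [dSP, delSP, delbarSP, der_apply_e, wedgeB]

lemma dSP_e₀₁ (q : ℝ) : dSP q (e {0, 1}) = -cSP • e {0, 1, 3} := by
  simp +decide [dSP, delSP, delbarSP, der_apply_e, wedgeB, Finset.erase_insert_of_ne]
  ext T; fin_cases T <;> simp +decide [e]

lemma dSP_e₀₂ (q : ℝ) : dSP q (e {0, 2}) = cSP • (e {0, 1, 2} + e {0, 2, 3}) -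
    ((q : ℂ) * I / 2) • (e {0, 1, 3} + e {1, 2, 3}) := by
  simp +decide [dSP, delSP, delbarSP, der_apply_e, wedgeB, Finset.erase_insert_of_ne]
  ext T; fin_cases T <;> simp +decide [e]

lemma dSP_e₀₃ (q : ℝ) : dSP q (e {0, 3}) = cSP • e {1, 2, 3} := by
  simp +decide [dSP, delSP, delbarSP, der_apply_e, wedgeB, Finset.erase_insert_of_ne]
  ext T; fin_cases T <;> simp +decide [e]

lemma dSP_e₁₂ (q : ℝ) : dSP q (e {1, 2}) = cSP • e {0, 1, 3} := by
  simp +decide [dSP, delSP, delbarSP, der_apply_e, wedgeB, Finset.erase_insert_of_ne]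
  ext T; fin_cases T <;> simp +decide [e]

lemma dSP_e₁₃ (q : ℝ) : dSP q (e {1, 3}) = 0 := by
  simp +decide [dSP, delSP, delbarSP, der_apply_e, wedgeB, Finset.erase_insert_of_ne]

lemma dSP_e₂₃ (q : ℝ) : dSP q (e {2, 3}) = cSP • e {1, 2, 3} := by
  simp +decide [dSP, delSP, delbarSP, der_apply_e, wedgeB, Finset.erase_insert_of_ne]
  ext T; fin_cases T <;> simp +decide [e]

lemma dSP_e_of_card_eq_three (q : ℝ) {S : ι} (hS : S.card = 3) : dSP q (e S) = 0 := by
  rcases (card_eq_three_iff_fin_four S).1 hS with rfl | rfl | rfl | rfl <;>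
  · simp +decide [dSP, delSP, delbarSP, der_apply_e, wedgeB, Finset.erase_insert_of_ne] <;>
    ext T <;> fin_cases T <;> simp +decide [e]

lemma map_dSP_Ak_zero (q : ℝ) : Submodule.map (dSP q) (Ak 0) = ⊥ := by
  rw [Ak, show {S : ι | S.card = 0} = {∅} by ext; simp, Set.image_singleton,
    Submodule.map_span, Set.image_singleton, dSP_e_empty, Submodule.span_zero_singleton]

lemma Ak_one_inf_ker_dSP (q : ℝ) :
    Ak 1 ⊓ LinearMap.ker (dSP q) = ℂ ∙ (e {1} - e {3}) := by
  apply le_antisymm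
  · rintro v ⟨hv, hdv⟩
    have hexp := eq_of_mem_Ak_one hv
    rw [SetLike.mem_coe, LinearMap.mem_ker, hexp] at hdv
    simp only [map_add, map_smul, dSP_e₀, dSP_e₁, dSP_e₂, dSP_e₃] at hdv
    have h01 := congrFun hdv {0, 1}
    have h03 := congrFun hdv {0, 3}
    have h13 := congrFun hdv {1, 3}
    simp +decide [e, cSP_ne_zero] at h01 h03 h13
    have h3 : v {3} = -v {1} := by
      have : (v {1} + v {3}) * cSP = 0 := by
        linear_combination h13 - ((q : ℂ) * I / 2) * (h01 + h03)
      simpa [cSP_ne_zero, add_eq_zero_iff_eq_neg'] using this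
    refine Submodule.mem_span_singleton.2 ⟨v {1}, ?_⟩
    conv_rhs => rw [hexp]
    rw [h01, h03, h3]
    module
  · rw [Submodule.span_singleton_le_iff_mem]
    exact ⟨sub_mem (e_mem_Ak rfl) (e_mem_Ak rfl), by simp [dSP_e₁, dSP_e₃]⟩

lemma map_dSP_Ak_one_le_ker (q : ℝ) : Submodule.map (dSP q) (Ak 1) ≤ LinearMap.ker (dSP q) := by
  rw [Ak, Submodule.map_span, Submodule.span_le]
  rintro _ ⟨_, ⟨S, hS, rfl⟩, rfl⟩
  rcases (card_eq_one_iff_fin_four S).1 hS with rfl | rfl | rfl | rfl <;>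
  simp [dSP_e₀, dSP_e₁, dSP_e₂, dSP_e₃, dSP_e₀₁, dSP_e₀₃, dSP_e₁₂, dSP_e₁₃, dSP_e₂₃]

lemma Ak_two_inf_ker_dSP_le (q : ℝ) :
    Ak 2 ⊓ LinearMap.ker (dSP q) ≤ Submodule.map (dSP q) (Ak 1) := by
  rintro v ⟨hv, hdv⟩
  have hexp := eq_of_mem_Ak_two hv
  rw [SetLike.mem_coe, LinearMap.mem_ker, hexp] at hdv
  simp only [map_add, map_smul, dSP_e₀₁, dSP_e₀₂, dSP_e₀₃, dSP_e₁₂, dSP_e₁₃, dSP_e₂₃] at hdv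
  have h012 := congrFun hdv {0, 1, 2}
  have h013 := congrFun hdv {0, 1, 3}
  have h123 := congrFun hdv {1, 2, 3}
  simp +decide [e, cSP_ne_zero] at h012 h013 h123
  have h12 : v {1, 2} = v {0, 1} := by
    have : (v {1, 2} - v {0, 1}) * cSP = 0 := by
      linear_combination h013 + ((q : ℂ) * I / 2) * h012
    simpa [cSP_ne_zero, sub_eq_zero] using this
  have h23 : v {2, 3} = -v {0, 3} := by
    have : (v {2, 3} + v {0, 3}) * cSP = 0 := by
      linear_combination h123 + ((q : ℂ) * I / 2) * h012
    simpa [cSP_ne_zero, add_eq_zero_iff_eq_neg] using this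
  refine ⟨cSP⁻¹ • (v {0, 1} • e {0} + v {0, 3} • e {2} +
      (v {1, 3} - (q : ℂ) * I / 2 * cSP⁻¹ * (v {0, 1} + v {0, 3})) • e {1}),
    by apply_rules only [Submodule.smul_mem, add_mem, e_mem_Ak_iff.2, rfl], ?_⟩
  simp only [map_add, map_smul, dSP_e₀, dSP_e₁, dSP_e₂]
  conv_rhs => rw [hexp, h012, h12, h23]
  have := cSP_ne_zero
  match_scalars <;> field_simp
  ring

lemma Ak_two_inf_ker_dSP (q : ℝ) :
    Ak 2 ⊓ LinearMap.ker (dSP q) = Submodule.map (dSP q) (Ak 1) :=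
  le_antisymm (Ak_two_inf_ker_dSP_le q)
    (le_inf (Submodule.map_le_iff_le_comap.2 fun _ hv => dSP_mem_Ak q hv)
      (map_dSP_Ak_one_le_ker q))

lemma Ak_three_le_ker_dSP (q : ℝ) : Ak 3 ≤ LinearMap.ker (dSP q) := by
  rw [Ak, Submodule.span_le]
  rintro _ ⟨S, hS, rfl⟩
  exact dSP_e_of_card_eq_three q hS

def h3Generator (q : ℝ) : V :=
  e {0, 1, 2} - (q : ℂ) • e {0, 1, 3} - e {0, 2, 3} + (q : ℂ) • e {1, 2, 3}

lemma map_dSP_Ak_two_le_ker (q : ℝ) : Submodule.map (dSP q) (Ak 2) ≤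
    LinearMap.ker (LinearMap.proj (R := ℂ) (φ := fun _ : ι => ℂ) {0, 1, 2} -
      LinearMap.proj {0, 2, 3}) := by
  rw [Ak, Submodule.map_span, Submodule.span_le]
  rintro _ ⟨_, ⟨S, hS, rfl⟩, rfl⟩
  rcases (card_eq_two_iff_fin_four S).1 hS with rfl | rfl | rfl | rfl | rfl | rfl <;>
  simp +decide [dSP_e₀₁, dSP_e₀₂, dSP_e₀₃, dSP_e₁₂, dSP_e₁₃, dSP_e₂₃, e]

lemma h3Generator_notMem_map_dSP (q : ℝ) : h3Generator q ∉ Submodule.map (dSP q) (Ak 2) :=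
  fun h => by simpa +decide [h3Generator, e] using map_dSP_Ak_two_le_ker q h

lemma Ak_three_eq_sup (q : ℝ) :
    Ak 3 = Submodule.map (dSP q) (Ak 2) ⊔ ℂ ∙ h3Generator q := by
  set B := Submodule.map (dSP q) (Ak 2) ⊔ ℂ ∙ h3Generator q
  have hc := cSP_ne_zero
  have h013 : e {0, 1, 3} ∈ B := Submodule.mem_sup_left
    ⟨cSP⁻¹ • e {1, 2}, Submodule.smul_mem _ _ (e_mem_Ak rfl), by simp [dSP_e₁₂, hc]⟩
  have h123 : e {1, 2, 3} ∈ B := Submodule.mem_sup_left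
    ⟨cSP⁻¹ • e {0, 3}, Submodule.smul_mem _ _ (e_mem_Ak rfl), by simp [dSP_e₀₃, hc]⟩
  have hsum : e {0, 1, 2} + e {0, 2, 3} ∈ B := Submodule.mem_sup_left
    ⟨cSP⁻¹ • (e {0, 2} + ((q : ℂ) * I / 2 * cSP⁻¹) • (e {1, 2} + e {0, 3})),
      by apply_rules only [Submodule.smul_mem, add_mem, e_mem_Ak_iff.2, rfl], by
      simp only [map_smul, map_add, dSP_e₀₂, dSP_e₁₂, dSP_e₀₃]
      match_scalars <;> field_simp <;> ring⟩
  have hgen : h3Generator q ∈ B := Submodule.mem_sup_right (Submodule.mem_span_singleton_self _)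
  have h012 : e {0, 1, 2} ∈ B := by
    have : (2 : ℂ) • e {0, 1, 2} = (e {0, 1, 2} + e {0, 2, 3}) + h3Generator q +
        (q : ℂ) • e {0, 1, 3} - (q : ℂ) • e {1, 2, 3} := by
      rw [h3Generator]; module
    rw [← Submodule.smul_mem_iff _ (two_ne_zero (α := ℂ)), this]
    exact sub_mem (add_mem (add_mem hsum hgen) (Submodule.smul_mem _ _ h013))
      (Submodule.smul_mem _ _ h123)
  have h023 : e {0, 2, 3} ∈ B := by
    simpa using sub_mem hsum h012
  apply le_antisymm
  · rw [Ak, Submodule.span_le]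
    rintro _ ⟨S, hS, rfl⟩
    rcases (card_eq_three_iff_fin_four S).1 hS with rfl | rfl | rfl | rfl
    exacts [h012, h013, h023, h123]
  · refine sup_le (Submodule.map_le_iff_le_comap.2 fun _ hv => dSP_mem_Ak q hv) ?_
    rw [Submodule.span_singleton_le_iff_mem, h3Generator]
    apply_rules only [Submodule.smul_mem, add_mem, sub_mem, e_mem_Ak_iff.2, rfl]

/-- de Rham cohomology of the Inoue S^± double complex (any q ∈ ℝ): b1 = 1, generated by
φ2 - φ̄2; b2 = 0; b3 = 1, generated by φ1∧φ2∧φ̄1 - q φ1∧φ2∧φ̄2 - φ1∧φ̄1∧φ̄2 + q φ2∧φ̄1∧φ̄2. -/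
theorem inoue_Spm_de_rham (q : ℝ) :
    betti (dSP q) 1 = 1 ∧ betti (dSP q) 2 = 0 ∧ betti (dSP q) 3 = 1 ∧
    (Ak 1 ⊓ LinearMap.ker (dSP q) =
      Submodule.map (dSP q) (Ak 0) ⊔
        Submodule.span ℂ {e ({1} : Finset (Fin 4)) - e ({3} : Finset (Fin 4))}) ∧
    (Ak 3 ⊓ LinearMap.ker (dSP q) =
      Submodule.map (dSP q) (Ak 2) ⊔
        Submodule.span ℂ
          {e ({0, 1, 2} : Finset (Fin 4)) - (q : ℂ) • e ({0, 1, 3} : Finset (Fin 4)) -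
            e ({0, 2, 3} : Finset (Fin 4)) + (q : ℂ) • e ({1, 2, 3} : Finset (Fin 4))}) := by
  have hZ1 : Ak 1 ⊓ LinearMap.ker (dSP q) =
      Submodule.map (dSP q) (Ak 0) ⊔ ℂ ∙ (e {1} - e {3}) := by
    rw [map_dSP_Ak_zero, bot_sup_eq, Ak_one_inf_ker_dSP]
  have hZ3 : Ak 3 ⊓ LinearMap.ker (dSP q) =
      Submodule.map (dSP q) (Ak 2) ⊔ ℂ ∙ h3Generator q := by
    rw [inf_eq_left.2 (Ak_three_le_ker_dSP q), ← Ak_three_eq_sup]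
  have hg1 : e {1} - e {3} ∉ Submodule.map (dSP q) (Ak 0) := by
    rw [map_dSP_Ak_zero, Submodule.mem_bot, sub_eq_zero]
    exact fun h => by simpa +decide [e] using congrFun h {1}
  exact ⟨betti_succ_eq_one hZ1 hg1, betti_succ_eq_zero (Ak_two_inf_ker_dSP q),
    betti_succ_eq_one hZ3 (h3Generator_notMem_map_dSP q), hZ1, hZ3⟩
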